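/- Every trace u ∈ M(A^{±1},I) admits unique traces p and w such that u = p w p^{-1} and w is cyclically reduced. -/

import Mathlib

/-- The commutation relation on words generated by an independence relation. -/
def traceRel (A : Type) (I : A → A → Prop) : FreeMonoid A → FreeMonoid A → Prop :=
  fun x y => ∃ a b, I a b ∧ x = FreeMonoid.of a * FreeMonoid.of b ∧ y = FreeMonoid.of b * FreeMonoid.of a

/-- The trace congruence ≡_I. -/
def traceCon (A : Type) (I : A → A → Prop) : Con (FreeMonoid A) := conGen (traceRel A I)

/-- The trace monoid M(A,I). -/
abbrev Trace (A : Type) (I : A → A → Prop) := (traceCon A I).Quotient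

/-- The trace represented by a word. -/
def trc (A : Type) (I : A → A → Prop) (w : FreeMonoid A) : Trace A I := (traceCon A I).mk' w

/-- s I t: every letter of s is independent of every letter of t. -/
def TraceIndep (A : Type) (I : A → A → Prop) (s t : Trace A I) : Prop :=
  ∀ w w' : FreeMonoid A, s = trc A I w → t = trc A I w' →
    ∀ a ∈ w.toList, ∀ b ∈ w'.toList, I a b

/-- A trace is connected if it has no nontrivial factorization into independent factors. -/
def TraceConnected (A : Type) (I : A → A → Prop) (t : Trace A I) : Prop :=
  ∀ u v : Trace A I, t = u * v → TraceIndep A I u v → u = 1 ∨ v = 1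

/-- The set of prefixes of a trace. -/
def tracePrefixes (A : Type) (I : A → A → Prop) (t : Trace A I) : Set (Trace A I) :=
  {p | ∃ q, t = p * q}

/-- The independence relation extended to letters and their formal inverses:
`Sum.inl a` is the generator a, `Sum.inr a` its inverse a⁻¹. -/
def extI (A : Type) (I : A → A → Prop) : A ⊕ A → A ⊕ A → Prop :=
  fun x y => I (Sum.elim id id x) (Sum.elim id id y)

/-- Traces over the alphabet A^{±1}. -/
abbrev GTrace (A : Type) (I : A → A → Prop) := Trace (A ⊕ A) (extI A I)

/-- The congruence on words over A^{±1} defining the graph group G(A,I):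
commutations of independent letters and free cancellations a a⁻¹ = 1. -/
def ggCon (A : Type) (I : A → A → Prop) : Con (FreeMonoid (A ⊕ A)) :=
  conGen (fun x y => traceRel (A ⊕ A) (extI A I) x y ∨
    ∃ a : A ⊕ A, x = FreeMonoid.of a * FreeMonoid.of (Sum.swap a) ∧ y = 1)

/-- An irreducible trace: one containing no factor a a⁻¹. -/
def IsIRR (A : Type) (I : A → A → Prop) (t : GTrace A I) : Prop :=
  ¬ ∃ (u v : GTrace A I) (a : A ⊕ A),
      t = u * trc (A ⊕ A) (extI A I)
            (FreeMonoid.of a * FreeMonoid.of (Sum.swap a)) * v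

/-- The formal inverse of a word over A^{±1}. -/
def wordInv (A : Type) (w : FreeMonoid (A ⊕ A)) : FreeMonoid (A ⊕ A) :=
  FreeMonoid.ofList ((FreeMonoid.toList w).reverse.map Sum.swap)

/-- A cyclically reduced trace: not of the form a v a⁻¹. -/
def CycReduced (A : Type) (I : A → A → Prop) (t : GTrace A I) : Prop :=
  ¬ ∃ (a : A ⊕ A) (v : GTrace A I),
      t = trc (A ⊕ A) (extI A I) (FreeMonoid.of a) * v *
            trc (A ⊕ A) (extI A I) (FreeMonoid.of (Sum.swap a))

/-!
Existence: peel letters `a ⋯ a⁻¹` off both ends of `u` as long as possible; each step lowers the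
length by two. Uniqueness, by induction on the length: if `a x a⁻¹ = b y b⁻¹` with `a ≠ b`, Levi's
lemma for traces makes `a` and `b` independent and gives `x = b z b⁻¹` and `y = a z a⁻¹`, so the
decompositions of `x` and `y` both come from the one of `z`, and `a b s = b a s`. Cancellativity
and Levi's lemma are proved on words, where trace equivalence is generated by swaps of adjacent
independent letters.
-/

open Relation

section Words

variable {α : Type} {J : α → α → Prop}

def SwapStep (J : α → α → Prop) (x y : List α) : Prop :=
  ∃ l r a b, J a b ∧ x = l ++ a :: b :: r ∧ y = l ++ b :: a :: r

def SwapEquiv (J : α → α → Prop) : List α → List α → Prop :=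
  ReflTransGen (SwapStep J)

instance [Std.Symm J] : Std.Symm (SwapStep J) where
  symm := by
    rintro _ _ ⟨l, r, a, b, hab, rfl, rfl⟩
    exact ⟨l, r, b, a, Std.Symm.symm _ _ hab, rfl, rfl⟩

namespace SwapEquiv

@[refl]
theorem refl (x : List α) : SwapEquiv J x x := ReflTransGen.refl

theorem swap {l r : List α} {a b : α} (hab : J a b) :
    SwapEquiv J (l ++ a :: b :: r) (l ++ b :: a :: r) :=
  .single ⟨l, r, a, b, hab, rfl, rfl⟩

theorem symm [Std.Symm J] {x y : List α} (h : SwapEquiv J x y) : SwapEquiv J y x :=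
  Std.Symm.symm (r := ReflTransGen (SwapStep J)) _ _ h

theorem append_left (u : List α) {x y : List α} (h : SwapEquiv J x y) :
    SwapEquiv J (u ++ x) (u ++ y) :=
  ReflTransGen.lift (u ++ ·) (by
    rintro _ _ ⟨l, r, a, b, hab, rfl, rfl⟩
    exact ⟨u ++ l, r, a, b, hab, by simp, by simp⟩) _ _ h

theorem append_right (u : List α) {x y : List α} (h : SwapEquiv J x y) :
    SwapEquiv J (x ++ u) (y ++ u) :=
  ReflTransGen.lift (· ++ u) (by
    rintro _ _ ⟨l, r, a, b, hab, rfl, rfl⟩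
    exact ⟨l, r ++ u, a, b, hab, by simp, by simp⟩) _ _ h

theorem append {x y z w : List α} (h : SwapEquiv J x y) (h' : SwapEquiv J z w) :
    SwapEquiv J (x ++ z) (y ++ w) :=
  (h.append_right z).trans (h'.append_left y)

theorem length_eq {x y : List α} (h : SwapEquiv J x y) : x.length = y.length := by
  induction h with
  | refl => rfl
  | tail _ hs ih =>
    obtain ⟨l, r, a, b, -, rfl, rfl⟩ := hs
    simpa using ih

theorem reverse [Std.Symm J] {x y : List α} (h : SwapEquiv J x y) :
    SwapEquiv J x.reverse y.reverse :=
  ReflTransGen.lift List.reverse (by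
    rintro _ _ ⟨l, r, a, b, hab, rfl, rfl⟩
    exact ⟨r.reverse, l.reverse, b, a, Std.Symm.symm _ _ hab, by simp, by simp⟩) _ _ h

theorem map {β : Type} {K : β → β → Prop} (f : α → β) (hf : ∀ a b, J a b → K (f a) (f b))
    {x y : List α} (h : SwapEquiv J x y) : SwapEquiv K (x.map f) (y.map f) :=
  ReflTransGen.lift (List.map f) (by
    rintro _ _ ⟨l, r, a, b, hab, rfl, rfl⟩
    exact ⟨l.map f, r.map f, f a, f b, hf a b hab, by simp, by simp⟩) _ _ h

theorem erase [DecidableEq α] (c : α) {x y : List α} (h : SwapEquiv J x y) :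
    SwapEquiv J (x.erase c) (y.erase c) :=
  ReflTransGen.lift' (List.erase · c) (by
    rintro _ _ ⟨l, r, a, b, hab, rfl, rfl⟩
    show SwapEquiv J ((l ++ _).erase c) ((l ++ _).erase c)
    by_cases hl : c ∈ l
    · simpa only [List.erase_append_left _ hl] using swap hab
    · simp only [List.erase_append_right _ hl]
      refine append_left l ?_
      by_cases ha : a = c <;> by_cases hb : b = c
      · subst ha hb; rfl
      · subst ha
        simp only [List.erase_cons_head, List.erase_cons_tail, beq_iff_eq, hb, not_false_eq_true]
        rfl
      · subst hb
        simp only [List.erase_cons_head, List.erase_cons_tail, beq_iff_eq, ha, not_false_eq_true]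
        rfl
      · simpa [List.erase_cons, ha, hb] using swap (l := []) hab) _ _ h

theorem cons_cancel {c : α} {x y : List α} (h : SwapEquiv J (c :: x) (c :: y)) :
    SwapEquiv J x y := by
  classical
  simpa using h.erase c

end SwapEquiv

def MovableToFront (J : α → α → Prop) (c : α) : List α → Prop
  | [] => False
  | d :: l => d = c ∨ J c d ∧ MovableToFront J c l

theorem MovableToFront.of_append_singleton {c d : α} {l : List α}
    (h : MovableToFront J c (l ++ [d])) (hdc : d ≠ c) : MovableToFront J c l := by
  induction l with
  | nil => exact (h.resolve_left hdc).2
  | cons e l ih => exact h.imp_right (And.imp_right ih)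

theorem MovableToFront.swap {c a b : α} (hab : J a b) {l r : List α}
    (h : MovableToFront J c (l ++ a :: b :: r)) : MovableToFront J c (l ++ b :: a :: r) := by
  induction l with
  | nil =>
    rcases h with rfl | ⟨hca, rfl | ⟨hcb, hr⟩⟩
    · exact .inr ⟨hab, .inl rfl⟩
    · exact .inl rfl
    · exact .inr ⟨hcb, .inr ⟨hca, hr⟩⟩
  | cons e l ih => exact h.imp_right (And.imp_right ih)

theorem SwapEquiv.movableToFront {c : α} {x y : List α} (h : SwapEquiv J x y)
    (hx : MovableToFront J c x) : MovableToFront J c y := by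
  induction h with
  | refl => exact hx
  | tail _ hs ih =>
    obtain ⟨l, r, a, b, hab, rfl, rfl⟩ := hs
    exact ih.swap hab

theorem MovableToFront.exists_swapEquiv_cons [Std.Symm J] {c : α} {l : List α}
    (h : MovableToFront J c l) : ∃ m, SwapEquiv J l (c :: m) := by
  induction l with
  | nil => exact h.elim
  | cons d l ih =>
    rcases h with rfl | ⟨hcd, hl⟩
    · exact ⟨l, .refl _⟩
    · obtain ⟨m, hm⟩ := ih hl
      exact ⟨d :: m,
        (hm.append_left [d]).trans (SwapEquiv.swap (l := []) (Std.Symm.symm _ _ hcd))⟩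

end Words

namespace Trace

variable {α : Type} {J : α → α → Prop}

local notation "「" a "」" => trc α J (FreeMonoid.of a)

theorem exists_trc_ofList (t : Trace α J) : ∃ l : List α, trc α J (.ofList l) = t := by
  obtain ⟨w, rfl⟩ := Con.mk'_surjective t
  exact ⟨w.toList, rfl⟩

theorem trc_mul (x y : FreeMonoid α) : trc α J (x * y) = trc α J x * trc α J y :=
  map_mul _ x y

theorem trc_one : trc α J 1 = 1 :=
  map_one _

theorem trc_ofList_cons (a : α) (l : List α) :
    trc α J (.ofList (a :: l)) = 「a」 * trc α J (.ofList l) :=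
  trc_mul (.of a) (.ofList l)

theorem trc_ofList_append_singleton (l : List α) (a : α) :
    trc α J (.ofList (l ++ [a])) = trc α J (.ofList l) * 「a」 :=
  trc_mul (.ofList l) (.of a)

theorem eq_one_or_exists_eq_letter_mul (t : Trace α J) : t = 1 ∨ ∃ a s, t = 「a」 * s := by
  obtain ⟨_ | ⟨a, l⟩, rfl⟩ := exists_trc_ofList t
  · exact .inl trc_one
  · exact .inr ⟨a, _, trc_ofList_cons a l⟩

theorem trc_eq_trc_iff {x y : List α} :
    trc α J (.ofList x) = trc α J (.ofList y) ↔ SwapEquiv (SymmGen J) x y := by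
  refine (Con.eq _).trans ⟨fun h => ?_, fun h => ?_⟩
  · let c : Con (FreeMonoid α) :=
      { r := fun u v => SwapEquiv (SymmGen J) u.toList v.toList
        iseqv := ⟨fun _ => .refl _, SwapEquiv.symm, ReflTransGen.trans⟩
        mul' := SwapEquiv.append }
    have hle : traceCon α J ≤ c := Con.conGen_le.2 <| by
      rintro _ _ ⟨a, b, hab, rfl, rfl⟩
      exact SwapEquiv.swap (l := []) (r := []) (.of_rel hab)
    exact hle h
  · induction h with
    | refl => exact Con.refl _ _
    | tail _ hs ih =>
      obtain ⟨l, r, a, b, hab, rfl, rfl⟩ := hs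
      refine (traceCon α J).trans ih ?_
      have hswap : traceCon α J (.of a * .of b) (.of b * .of a) := by
        rcases hab with hab | hba
        · exact ConGen.Rel.of _ _ ⟨a, b, hab, rfl, rfl⟩
        · exact ConGen.Rel.symm (ConGen.Rel.of _ _ ⟨b, a, hba, rfl, rfl⟩)
      simpa [FreeMonoid.ofList_cons, FreeMonoid.ofList_append, mul_assoc] using
        (traceCon α J).mul ((traceCon α J).refl (.ofList l))
          ((traceCon α J).mul hswap ((traceCon α J).refl (.ofList r)))

theorem letter_mul_letter_comm {a b : α} (h : SymmGen J a b) : 「a」 * 「b」 = 「b」 * 「a」 :=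
  trc_eq_trc_iff.2 (SwapEquiv.swap (l := []) (r := []) h)

def length (t : Trace α J) : ℕ :=
  Con.liftOn t FreeMonoid.length fun _ _ h => (trc_eq_trc_iff.1 ((Con.eq _).2 h)).length_eq

theorem length_mul (s t : Trace α J) : (s * t).length = s.length + t.length := by
  obtain ⟨x, rfl⟩ := exists_trc_ofList s
  obtain ⟨y, rfl⟩ := exists_trc_ofList t
  exact List.length_append

theorem length_lt_letter_mul_mul_letter (a b : α) (t : Trace α J) :
    t.length < (「a」 * t * 「b」).length := by
  rw [length_mul, length_mul]
  change t.length < 1 + t.length + 1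
  omega

def reverse (t : Trace α J) : Trace α J :=
  Con.liftOn t (fun w => trc α J w.reverse) fun _ _ h =>
    trc_eq_trc_iff.2 (trc_eq_trc_iff.1 ((Con.eq _).2 h)).reverse

theorem reverse_mul (s t : Trace α J) : (s * t).reverse = t.reverse * s.reverse := by
  obtain ⟨x, rfl⟩ := exists_trc_ofList s
  obtain ⟨y, rfl⟩ := exists_trc_ofList t
  exact congrArg (trc α J) FreeMonoid.reverse_mul

theorem reverse_letter (a : α) : (「a」).reverse = 「a」 := rfl

theorem reverse_reverse (t : Trace α J) : t.reverse.reverse = t := by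
  obtain ⟨x, rfl⟩ := exists_trc_ofList t
  exact congrArg (trc α J) FreeMonoid.reverse_reverse

theorem letter_mul_left_cancel {a : α} {s t : Trace α J} (h : 「a」 * s = 「a」 * t) : s = t := by
  obtain ⟨x, rfl⟩ := exists_trc_ofList s
  obtain ⟨y, rfl⟩ := exists_trc_ofList t
  exact trc_eq_trc_iff.2 (trc_eq_trc_iff.1 h).cons_cancel

instance : IsLeftCancelMul (Trace α J) where
  mul_left_cancel s := by
    obtain ⟨l, rfl⟩ := exists_trc_ofList s
    induction l with
    | nil =>
      intro t u h
      simpa [trc_one] using h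
    | cons a l ih =>
      intro t u h
      exact ih (letter_mul_left_cancel (by simpa only [trc_ofList_cons, mul_assoc] using h))

instance : IsRightCancelMul (Trace α J) where
  mul_right_cancel s t u h := by
    have h' := congrArg reverse h
    rw [reverse_mul, reverse_mul] at h'
    simpa only [reverse_reverse] using congrArg reverse (mul_left_cancel h')

theorem exists_eq_letter_mul_iff {c : α} {l : List α} :
    (∃ s, trc α J (.ofList l) = 「c」 * s) ↔ MovableToFront (SymmGen J) c l := by
  constructor
  · rintro ⟨s, hs⟩
    obtain ⟨m, rfl⟩ := exists_trc_ofList s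
    rw [← trc_ofList_cons] at hs
    exact (trc_eq_trc_iff.1 hs).symm.movableToFront (.inl rfl)
  · intro h
    obtain ⟨m, hm⟩ := h.exists_swapEquiv_cons
    exact ⟨trc α J (.ofList m), (trc_eq_trc_iff.2 hm).trans (trc_ofList_cons c m)⟩

theorem letter_mul_eq_letter_mul {c d : α} (hcd : c ≠ d) {s t : Trace α J}
    (h : 「c」 * s = 「d」 * t) : SymmGen J c d ∧ ∃ r, s = 「d」 * r ∧ t = 「c」 * r := by
  obtain ⟨l, rfl⟩ := exists_trc_ofList s
  have hmov : MovableToFront (SymmGen J) d (c :: l) :=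
    exists_eq_letter_mul_iff.1 ⟨t, (trc_ofList_cons c l).trans h⟩
  obtain ⟨hdc, hl⟩ := hmov.resolve_left hcd
  obtain ⟨r, hr⟩ := exists_eq_letter_mul_iff.2 hl
  refine ⟨hdc.symm, r, hr, mul_left_cancel (a := 「d」) ?_⟩
  rw [← h, hr, ← mul_assoc, ← mul_assoc, letter_mul_letter_comm hdc.symm]

theorem letter_mul_eq_mul_letter {c d : α} (hcd : c ≠ d) {s t : Trace α J}
    (h : 「c」 * s = t * 「d」) : ∃ r, s = r * 「d」 ∧ t = 「c」 * r := by
  obtain ⟨l, rfl⟩ := exists_trc_ofList t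
  have hmov : MovableToFront (SymmGen J) c (l ++ [d]) :=
    exists_eq_letter_mul_iff.1 ⟨s, (trc_ofList_append_singleton l d).trans h.symm⟩
  obtain ⟨r, hr⟩ := exists_eq_letter_mul_iff.2 (hmov.of_append_singleton hcd.symm)
  refine ⟨r, mul_left_cancel (a := 「c」) ?_, hr⟩
  rw [h, hr, mul_assoc]

theorem mul_letter_eq_mul_letter {c d : α} (hcd : c ≠ d) {s t : Trace α J}
    (h : s * 「c」 = t * 「d」) : ∃ r, s = r * 「d」 ∧ t = r * 「c」 := by
  have h' := congrArg reverse h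
  rw [reverse_mul, reverse_mul, reverse_letter, reverse_letter] at h'
  obtain ⟨-, r, hs, ht⟩ := letter_mul_eq_letter_mul hcd h'
  refine ⟨r.reverse, ?_, ?_⟩
  · rw [← reverse_reverse s, hs, reverse_mul, reverse_letter]
  · rw [← reverse_reverse t, ht, reverse_mul, reverse_letter]

end Trace

section GraphTrace

variable {A : Type} {I : A → A → Prop}

local notation "「" a "」" => trc (A ⊕ A) (extI A I) (FreeMonoid.of a)

theorem extI_swap_swap {a b : A ⊕ A} : extI A I a.swap b.swap ↔ extI A I a b := by
  cases a <;> cases b <;> rfl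

theorem ne_swap_of_symmGen_extI (hirr : ∀ a, ¬ I a a) {a b : A ⊕ A}
    (h : SymmGen (extI A I) a b) : a ≠ b.swap := by
  rintro rfl
  cases b <;> rcases h with h | h <;> exact hirr _ h

def traceInv (t : GTrace A I) : GTrace A I :=
  Con.liftOn t (fun w => trc _ _ (wordInv A w)) fun _ _ h =>
    Trace.trc_eq_trc_iff.2 <| (Trace.trc_eq_trc_iff.1 ((Con.eq _).2 h)).reverse.map Sum.swap
      fun _ _ hab => hab.imp extI_swap_swap.2 extI_swap_swap.2

theorem traceInv_mul (s t : GTrace A I) : traceInv (s * t) = traceInv t * traceInv s := by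
  obtain ⟨x, rfl⟩ := Trace.exists_trc_ofList s
  obtain ⟨y, rfl⟩ := Trace.exists_trc_ofList t
  exact congrArg (trc _ _) (by simp [wordInv])

theorem traceInv_letter (a : A ⊕ A) : traceInv 「a」 = 「a.swap」 := rfl

theorem traceInv_one : traceInv (1 : GTrace A I) = 1 := rfl

def traceConj (p w : GTrace A I) : GTrace A I := p * w * traceInv p

theorem traceConj_one (w : GTrace A I) : traceConj 1 w = w := by
  rw [traceConj, traceInv_one, one_mul, mul_one]

theorem traceConj_letter_mul (a : A ⊕ A) (p w : GTrace A I) :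
    traceConj (「a」 * p) w = 「a」 * traceConj p w * 「a.swap」 := by
  simp only [traceConj, traceInv_mul, traceInv_letter, mul_assoc]

theorem not_cycReduced_traceConj_letter_mul (a : A ⊕ A) (p w : GTrace A I) :
    ¬ CycReduced A I (traceConj (「a」 * p) w) :=
  fun h => h ⟨a, traceConj p w, traceConj_letter_mul a p w⟩

theorem exists_cycReduced_traceConj (u : GTrace A I) :
    ∃ p w, CycReduced A I w ∧ traceConj p w = u := by
  by_cases hu : CycReduced A I u
  · exact ⟨1, u, hu, traceConj_one u⟩
  · obtain ⟨a, v, hv⟩ := not_not.1 hu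
    obtain ⟨p, w, hw, rfl⟩ := exists_cycReduced_traceConj v
    exact ⟨「a」 * p, w, hw, (traceConj_letter_mul a p w).trans hv.symm⟩
termination_by u.length
decreasing_by rw [hv]; exact Trace.length_lt_letter_mul_mul_letter _ _ _

theorem letter_conj_eq_letter_conj (hirr : ∀ a, ¬ I a a) {a b : A ⊕ A} (hab : a ≠ b)
    {x y : GTrace A I} (h : 「a」 * x * 「a.swap」 = 「b」 * y * 「b.swap」) :
    SymmGen (extI A I) a b ∧ ∃ z, x = 「b」 * z * 「b.swap」 ∧ y = 「a」 * z * 「a.swap」 := by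
  rw [mul_assoc, mul_assoc] at h
  obtain ⟨hJ, r, hx, hy⟩ := Trace.letter_mul_eq_letter_mul hab h
  obtain ⟨x', hr, rfl⟩ :=
    Trace.letter_mul_eq_mul_letter (ne_swap_of_symmGen_extI hirr hJ.symm) hx.symm
  obtain ⟨y', rfl, rfl⟩ :=
    Trace.letter_mul_eq_mul_letter (ne_swap_of_symmGen_extI hirr hJ) hy.symm
  obtain ⟨z, rfl, rfl⟩ :=
    Trace.mul_letter_eq_mul_letter (Sum.swap_leftInverse.injective.ne hab) hr.symm
  exact ⟨hJ, z, by simp only [mul_assoc], by simp only [mul_assoc]⟩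

theorem eq_and_eq_of_traceConj_eq (hirr : ∀ a, ¬ I a a) {u p₁ w₁ p₂ w₂ : GTrace A I}
    (h₁ : CycReduced A I w₁) (h₂ : CycReduced A I w₂)
    (e₁ : traceConj p₁ w₁ = u) (e₂ : traceConj p₂ w₂ = u) : p₁ = p₂ ∧ w₁ = w₂ := by
  rcases Trace.eq_one_or_exists_eq_letter_mul p₁ with rfl | ⟨a, q₁, rfl⟩ <;>
    rcases Trace.eq_one_or_exists_eq_letter_mul p₂ with rfl | ⟨b, q₂, rfl⟩
  · rw [traceConj_one] at e₁ e₂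
    exact ⟨rfl, e₁.trans e₂.symm⟩
  · rw [traceConj_one] at e₁
    exact absurd (e₁.trans e₂.symm ▸ h₁) (not_cycReduced_traceConj_letter_mul b q₂ w₂)
  · rw [traceConj_one] at e₂
    exact absurd (e₂.trans e₁.symm ▸ h₂) (not_cycReduced_traceConj_letter_mul a q₁ w₁)
  rw [traceConj_letter_mul] at e₁ e₂
  -- these two facts discharge the termination proof of the recursive calls below
  have hx : (traceConj q₁ w₁).length < u.length :=
    e₁ ▸ Trace.length_lt_letter_mul_mul_letter _ _ _
  have hy : (traceConj q₂ w₂).length < u.length :=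
    e₂ ▸ Trace.length_lt_letter_mul_mul_letter _ _ _
  have e := e₁.trans e₂.symm
  rcases eq_or_ne a b with rfl | hab
  · obtain ⟨rfl, rfl⟩ := eq_and_eq_of_traceConj_eq hirr h₁ h₂ rfl
      (mul_left_cancel (mul_right_cancel e)).symm
    exact ⟨rfl, rfl⟩
  · obtain ⟨hJ, z, hx', hy'⟩ := letter_conj_eq_letter_conj hirr hab e
    obtain ⟨s, w, hw, rfl⟩ := exists_cycReduced_traceConj z
    rw [← traceConj_letter_mul] at hx' hy'
    obtain ⟨rfl, rfl⟩ := eq_and_eq_of_traceConj_eq hirr h₁ hw rfl hx'.symm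
    obtain ⟨rfl, rfl⟩ := eq_and_eq_of_traceConj_eq hirr h₂ hw rfl hy'.symm
    exact ⟨by rw [← mul_assoc, ← mul_assoc, Trace.letter_mul_letter_comm hJ], rfl⟩
termination_by u.length

end GraphTrace

theorem cyclically_reduced_decomposition_general (A : Type)
    (I : A → A → Prop) (hirr : ∀ a, ¬ I a a)
    (u : GTrace A I) :
    ∃! pw : GTrace A I × GTrace A I,
      CycReduced A I pw.2 ∧
      ∃ wp : FreeMonoid (A ⊕ A), pw.1 = trc (A ⊕ A) (extI A I) wp ∧
        u = pw.1 * pw.2 * trc (A ⊕ A) (extI A I) (wordInv A wp) := by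
  obtain ⟨p, w, hw, rfl⟩ := exists_cycReduced_traceConj u
  obtain ⟨wp, rfl⟩ := Con.mk'_surjective p
  refine ⟨(trc _ _ wp, w), ⟨hw, wp, rfl, rfl⟩, ?_⟩
  rintro ⟨_, w'⟩ ⟨hw', wp', rfl, h⟩
  obtain ⟨hp, rfl⟩ := eq_and_eq_of_traceConj_eq hirr hw' hw h.symm rfl
  exact Prod.ext hp rfl

/-- Every trace u factors uniquely as u = p w p⁻¹ with w cyclically reduced. -/
theorem cyclically_reduced_decomposition (A : Type) [Fintype A]
    (I : A → A → Prop) (hirr : ∀ a, ¬ I a a) (hsym : ∀ a b, I a b → I b a)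
    (u : GTrace A I) :
    ∃! pw : GTrace A I × GTrace A I,
      CycReduced A I pw.2 ∧
      ∃ wp : FreeMonoid (A ⊕ A), pw.1 = trc (A ⊕ A) (extI A I) wp ∧
        u = pw.1 * pw.2 * trc (A ⊕ A) (extI A I) (wordInv A wp) :=
  cyclically_reduced_decomposition_general A I hirr u
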